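/- arXiv:2012.03863 — 5 statements merged into one kernel-verified Lean document; each statement's English description precedes it below -/
import Mathlib

section
/- Let S be a multisemigroup and let χ be a family of sub-multisemigroups of S such that every finite subset of S is contained in some member of χ. Then for all x, y ∈ S: L_x = L_y if and only if x = y, or there exists T ∈ χ with x ∈ T, y ∈ T and L^T_x = L^T_y. (Green's L-relation on S equals the union of the diagonal relation with the L_T-relations of the members of χ.) -/
open Set

/-- A subset `T` of a multisemigroup `(S, mul)` is a sub-multisemigroup if it is
closed under the multivalued operation. -/
def IsSubMultisemigroup {S : Type*} (mul : S → S → Set S) (T : Set S) : Prop :=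
  ∀ a ∈ T, ∀ b ∈ T, mul a b ⊆ T

/-- The principal left ideal `L^T_x = {x} ∪ ⋃_{s ∈ T} mul s x` of `x` relative to a
subset `T` of a multisemigroup. -/
def greenL {S : Type*} (mul : S → S → Set S) (T : Set S) (x : S) : Set S :=
  {x} ∪ ⋃ s ∈ T, mul s x

lemma greenL_mono_step {S : Type*} (mul : S → S → Set S)
    (assoc : ∀ a b c : S, (⋃ t ∈ mul a b, mul t c) = ⋃ u ∈ mul b c, mul a u)
    {W : Set S} (hW : ∀ a ∈ W, ∀ b ∈ W, mul a b ⊆ W)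
    {x y s : S} (hs : s ∈ W) (hxy : x ∈ mul s y) :
    greenL mul W x ⊆ greenL mul W y := by
  intro z hz
  rcases hz with hz | hz
  · rcases hz with rfl
    exact Or.inr (mem_biUnion hs hxy)
  · simp only [mem_iUnion] at hz
    obtain ⟨u, hu, hz⟩ := hz
    have h := assoc u s y
    have hz' : z ∈ ⋃ w ∈ mul s y, mul u w := mem_biUnion hxy hz
    rw [← h] at hz'
    simp only [mem_iUnion] at hz'
    obtain ⟨t, ht, hz'⟩ := hz'
    exact Or.inr (mem_biUnion (hW u hu s hs ht) hz')

/-- The L-part of Proposition 2.12 (cLbootleg): if `χ` is a family of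
sub-multisemigroups of a multisemigroup `S` such that every finite subset of `S`
is contained in some member of `χ`, then Green's L-relation on `S` is the union of
the diagonal relation with the L-relations of the members of `χ`. -/
theorem greenL_eq_iff_of_directed {S : Type*} (mul : S → S → Set S)
    (assoc : ∀ a b c : S, (⋃ t ∈ mul a b, mul t c) = ⋃ u ∈ mul b c, mul a u)
    (χ : Set (Set S)) (hχ : ∀ T ∈ χ, IsSubMultisemigroup mul T)
    (hfin : ∀ F : Set S, F.Finite → ∃ T ∈ χ, F ⊆ T) :
    ∀ x y : S, greenL mul Set.univ x = greenL mul Set.univ y ↔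
      x = y ∨ ∃ T ∈ χ, x ∈ T ∧ y ∈ T ∧ greenL mul T x = greenL mul T y := by
  intro x y
  have hu : ∀ a ∈ (univ : Set S), ∀ b ∈ (univ : Set S), mul a b ⊆ univ :=
    fun _ _ _ _ => subset_univ _
  constructor
  · intro h
    have hx : x ∈ greenL mul univ y := h ▸ Or.inl rfl
    have hy : y ∈ greenL mul univ x := h ▸ Or.inl rfl
    rcases hx with hx | hx
    · exact Or.inl hx
    rcases hy with hy | hy
    · exact Or.inl hy.symm
    simp only [mem_iUnion] at hx hy
    obtain ⟨s, -, hs⟩ := hx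
    obtain ⟨t, -, ht⟩ := hy
    obtain ⟨T, hT, hsub⟩ := hfin {x, y, s, t} (by
      apply Set.Finite.insert; apply Set.Finite.insert; apply Set.Finite.insert
      exact finite_singleton t)
    refine Or.inr ⟨T, hT, hsub (by simp), hsub (by simp), ?_⟩
    apply subset_antisymm
    · exact greenL_mono_step mul assoc (hχ T hT) (hsub (by simp)) hs
    · exact greenL_mono_step mul assoc (hχ T hT) (hsub (by simp)) ht
  · rintro (rfl | ⟨T, hT, hxT, hyT, hL⟩)
    · rfl
    have hx : x ∈ greenL mul T y := hL ▸ Or.inl rfl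
    have hy : y ∈ greenL mul T x := hL ▸ Or.inl rfl
    rcases hx with hx | hx
    · rcases hx with rfl; rfl
    rcases hy with hy | hy
    · rcases hy with rfl; rfl
    simp only [mem_iUnion] at hx hy
    obtain ⟨s, -, hs⟩ := hx
    obtain ⟨t, -, ht⟩ := hy
    apply subset_antisymm
    · exact greenL_mono_step mul assoc hu (mem_univ s) hs
    · exact greenL_mono_step mul assoc hu (mem_univ t) ht
end

section
/- Let S be a multisemigroup and let χ be a family of sub-multisemigroups of S such that every finite subset of S is contained in some member of χ. Then for all x, y ∈ S: R_x = R_y if and only if x = y, or there exists T ∈ χ with x ∈ T, y ∈ T and R^T_x = R^T_y. (Green's R-relation on S equals the union of the diagonal relation with the R_T-relations of the members of χ.) -/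
open Set

/-- The principal right ideal `R^T_x = {x} ∪ ⋃_{s ∈ T} mul x s` of `x` relative to a
subset `T` of a multisemigroup. -/
def greenR {S : Type*} (mul : S → S → Set S) (T : Set S) (x : S) : Set S :=
  {x} ∪ ⋃ s ∈ T, mul x s

/-- The R-part of Proposition 2.12 (cLbootleg): if `χ` is a family of
sub-multisemigroups of a multisemigroup `S` such that every finite subset of `S`
is contained in some member of `χ`, then Green's R-relation on `S` is the union of
the diagonal relation with the R-relations of the members of `χ`. -/
theorem greenR_eq_iff_of_directed {S : Type*} (mul : S → S → Set S)
    (assoc : ∀ a b c : S, (⋃ t ∈ mul a b, mul t c) = ⋃ u ∈ mul b c, mul a u)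
    (χ : Set (Set S)) (hχ : ∀ T ∈ χ, IsSubMultisemigroup mul T)
    (hfin : ∀ F : Set S, F.Finite → ∃ T ∈ χ, F ⊆ T) :
    ∀ x y : S, greenR mul Set.univ x = greenR mul Set.univ y ↔
      x = y ∨ ∃ T ∈ χ, x ∈ T ∧ y ∈ T ∧ greenR mul T x = greenR mul T y := by
  have key : ∀ (T' T : Set S) (x y u : S), u ∈ T → (∀ s ∈ T', mul u s ⊆ T) →
      y ∈ mul x u → greenR mul T' y ⊆ greenR mul T x := by
    intro T' T x y u huT hclose hy z hz
    rcases hz with hz | hz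
    · rcases hz with rfl
      exact Or.inr (mem_biUnion huT hy)
    · simp only [mem_iUnion] at hz
      obtain ⟨s, hs, hzs⟩ := hz
      have hmem : z ∈ ⋃ t ∈ mul x u, mul t s := mem_biUnion hy hzs
      rw [assoc] at hmem
      simp only [mem_iUnion] at hmem
      obtain ⟨w, hw, hzw⟩ := hmem
      exact Or.inr (mem_biUnion (hclose s hs hw) hzw)
  have memR : ∀ (T : Set S) (x y : S), y ∈ greenR mul T x →
      y = x ∨ ∃ u ∈ T, y ∈ mul x u := by
    intro T x y hy
    rcases hy with hy | hy
    · exact Or.inl hy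
    · simp only [mem_iUnion] at hy
      obtain ⟨u, hu, hyu⟩ := hy
      exact Or.inr ⟨u, hu, hyu⟩
  intro x y
  constructor
  · intro h
    by_cases hxy : x = y
    · exact Or.inl hxy
    right
    have hxR : x ∈ greenR mul univ y := by rw [← h]; exact Or.inl rfl
    have hyR : y ∈ greenR mul univ x := by rw [h]; exact Or.inl rfl
    rcases memR univ y x hxR with hx' | ⟨v, _, hxv⟩
    · exact absurd hx' hxy
    rcases memR univ x y hyR with hy' | ⟨u, _, hyu⟩
    · exact absurd hy'.symm hxy
    obtain ⟨T, hTχ, hsub⟩ := hfin {x, y, u, v} (by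
      apply Set.Finite.insert; apply Set.Finite.insert; apply Set.Finite.insert
      exact Set.finite_singleton v)
    have hxT : x ∈ T := hsub (by simp)
    have hyT : y ∈ T := hsub (by simp)
    have huT : u ∈ T := hsub (by simp)
    have hvT : v ∈ T := hsub (by simp)
    refine ⟨T, hTχ, hxT, hyT, subset_antisymm ?_ ?_⟩
    · exact key T T y x v hvT (fun s hs => hχ T hTχ v hvT s hs) hxv
    · exact key T T x y u huT (fun s hs => hχ T hTχ u huT s hs) hyu
  · rintro (rfl | ⟨T, _, _, _, hEq⟩)
    · rfl
    have hyR : y ∈ greenR mul T x := by rw [hEq]; exact Or.inl rfl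
    have hxR : x ∈ greenR mul T y := by rw [← hEq]; exact Or.inl rfl
    rcases memR T x y hyR with rfl | ⟨u, _, hyu⟩
    · rfl
    rcases memR T y x hxR with rfl | ⟨v, _, hxv⟩
    · rfl
    apply subset_antisymm
    · exact key univ univ y x v (mem_univ v) (fun s _ => subset_univ _) hxv
    · exact key univ univ x y u (mem_univ u) (fun s _ => subset_univ _) hyu
end

section
/- Let S be a multisemigroup and let χ be a family of sub-multisemigroups of S such that every finite subset of S is contained in some member of χ. Then for all x, y ∈ S: J_x = J_y if and only if x = y, or there exists T ∈ χ with x ∈ T, y ∈ T and J^T_x = J^T_y. (Green's J-relation on S equals the union of the diagonal relation with the J_T-relations of the members of χ.) -/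
open Set

/-- The principal two-sided ideal
`J^T_x = {x} ∪ ⋃_{s ∈ T} mul s x ∪ ⋃_{s ∈ T} mul x s ∪ ⋃_{s,t ∈ T} ⋃_{u ∈ mul s x} mul u t`
of `x` relative to a subset `T` of a multisemigroup. -/
def greenJ {S : Type*} (mul : S → S → Set S) (T : Set S) (x : S) : Set S :=
  {x} ∪ (⋃ s ∈ T, mul s x) ∪ (⋃ s ∈ T, mul x s) ∪
    ⋃ s ∈ T, ⋃ t ∈ T, ⋃ u ∈ mul s x, mul u t

section Aux

variable {S : Type*} {mul : S → S → Set S}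

theorem mem_greenJ {T : Set S} {x z : S} :
    z ∈ greenJ mul T x ↔ z = x ∨ (∃ s ∈ T, z ∈ mul s x) ∨ (∃ s ∈ T, z ∈ mul x s) ∨
      ∃ s ∈ T, ∃ t ∈ T, ∃ u ∈ mul s x, z ∈ mul u t := by
  simp [greenJ, or_assoc]

theorem self_mem_greenJ {T : Set S} {x : S} : x ∈ greenJ mul T x :=
  mem_greenJ.mpr (Or.inl rfl)

theorem greenJ_mono {T T' : Set S} (h : T ⊆ T') (x : S) :
    greenJ mul T x ⊆ greenJ mul T' x := by
  intro z hz
  rw [mem_greenJ] at hz ⊢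
  rcases hz with h1 | ⟨s, hs, hz⟩ | ⟨s, hs, hz⟩ | ⟨s, hs, t, ht, u, hu, hz⟩
  · exact Or.inl h1
  · exact Or.inr (Or.inl ⟨s, h hs, hz⟩)
  · exact Or.inr (Or.inr (Or.inl ⟨s, h hs, hz⟩))
  · exact Or.inr (Or.inr (Or.inr ⟨s, h hs, t, h ht, u, hu, hz⟩))

variable (assoc : ∀ a b c : S, (⋃ t ∈ mul a b, mul t c) = ⋃ u ∈ mul b c, mul a u)
include assoc

/-- `a * (b * c) ⊆ (a * b) * c` pointwise. -/
theorem assocA {a b c y z : S} (hy : y ∈ mul b c) (hz : z ∈ mul a y) :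
    ∃ t ∈ mul a b, z ∈ mul t c := by
  have : z ∈ ⋃ u ∈ mul b c, mul a u := Set.mem_biUnion hy hz
  rw [← assoc] at this
  simpa using this

/-- `(a * b) * c ⊆ a * (b * c)` pointwise. -/
theorem assocB {a b c y z : S} (hy : y ∈ mul a b) (hz : z ∈ mul y c) :
    ∃ u ∈ mul b c, z ∈ mul a u := by
  have : z ∈ ⋃ t ∈ mul a b, mul t c := Set.mem_biUnion hy hz
  rw [assoc] at this
  simpa using this

/-- Left multiplication by an element of `T` lands in the left/two-sided part. -/
theorem greenJ_left {T : Set S} (hT : IsSubMultisemigroup mul T) {x y a w : S}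
    (hy : y ∈ greenJ mul T x) (ha : a ∈ T) (hw : w ∈ mul a y) :
    (∃ p ∈ T, w ∈ mul p x) ∨ ∃ p ∈ T, ∃ q ∈ T, ∃ v ∈ mul p x, w ∈ mul v q := by
  rw [mem_greenJ] at hy
  rcases hy with rfl | ⟨s, hs, hy⟩ | ⟨s, hs, hy⟩ | ⟨s, hs, t, ht, u, hu, hy⟩
  · exact Or.inl ⟨a, ha, hw⟩
  · obtain ⟨p, hp, hwp⟩ := assocA assoc hy hw
    exact Or.inl ⟨p, hT a ha s hs hp, hwp⟩
  · obtain ⟨t, htm, hwt⟩ := assocA assoc hy hw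
    exact Or.inr ⟨a, ha, s, hs, t, htm, hwt⟩
  · obtain ⟨v, hv, hwv⟩ := assocA assoc hy hw
    obtain ⟨p, hp, hvp⟩ := assocA assoc hu hv
    exact Or.inr ⟨p, hT a ha s hs hp, t, ht, v, hvp, hwv⟩

/-- Right multiplication by an element of `T` lands in the right/two-sided part. -/
theorem greenJ_right {T : Set S} (hT : IsSubMultisemigroup mul T) {x y b w : S}
    (hy : y ∈ greenJ mul T x) (hb : b ∈ T) (hw : w ∈ mul y b) :
    (∃ q ∈ T, w ∈ mul x q) ∨ ∃ p ∈ T, ∃ q ∈ T, ∃ v ∈ mul p x, w ∈ mul v q := by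
  rw [mem_greenJ] at hy
  rcases hy with rfl | ⟨s, hs, hy⟩ | ⟨s, hs, hy⟩ | ⟨s, hs, t, ht, u, hu, hy⟩
  · exact Or.inl ⟨b, hb, hw⟩
  · exact Or.inr ⟨s, hs, b, hb, y, hy, hw⟩
  · obtain ⟨u, hu, hwu⟩ := assocB assoc hy hw
    exact Or.inl ⟨u, hT s hs b hb hu, hwu⟩
  · obtain ⟨v, hv, hwv⟩ := assocB assoc hy hw
    exact Or.inr ⟨s, hs, v, hT t ht b hb hv, u, hu, hwv⟩

/-- The key "ideal" property: `y ∈ J^T_x` implies `J^T_y ⊆ J^T_x`. -/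
theorem greenJ_subset {T : Set S} (hT : IsSubMultisemigroup mul T) {x y : S}
    (hy : y ∈ greenJ mul T x) : greenJ mul T y ⊆ greenJ mul T x := by
  intro z hz
  rw [mem_greenJ] at hz
  rw [mem_greenJ]
  rcases hz with rfl | ⟨a, ha, hz⟩ | ⟨b, hb, hz⟩ | ⟨a, ha, b, hb, w, hw, hz⟩
  · exact mem_greenJ.mp hy
  · rcases greenJ_left assoc hT hy ha hz with ⟨p, hp, h⟩ | ⟨p, hp, q, hq, v, hv, h⟩
    · exact Or.inr (Or.inl ⟨p, hp, h⟩)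
    · exact Or.inr (Or.inr (Or.inr ⟨p, hp, q, hq, v, hv, h⟩))
  · rcases greenJ_right assoc hT hy hb hz with ⟨q, hq, h⟩ | ⟨p, hp, q, hq, v, hv, h⟩
    · exact Or.inr (Or.inr (Or.inl ⟨q, hq, h⟩))
    · exact Or.inr (Or.inr (Or.inr ⟨p, hp, q, hq, v, hv, h⟩))
  · rcases greenJ_left assoc hT hy ha hw with ⟨p, hp, h⟩ | ⟨p, hp, q, hq, v, hv, h⟩
    · exact Or.inr (Or.inr (Or.inr ⟨p, hp, b, hb, w, h, hz⟩))
    · obtain ⟨r, hr, hzr⟩ := assocB assoc h hz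
      exact Or.inr (Or.inr (Or.inr ⟨p, hp, r, hT q hq b hb hr, v, hv, hzr⟩))

theorem greenJ_eq {T : Set S} (hT : IsSubMultisemigroup mul T) {x y : S}
    (hy : y ∈ greenJ mul T x) (hx : x ∈ greenJ mul T y) :
    greenJ mul T x = greenJ mul T y :=
  Set.Subset.antisymm (greenJ_subset assoc hT hx) (greenJ_subset assoc hT hy)

end Aux

/-- The J-part of Proposition 2.12 (cLbootleg): if `χ` is a family of
sub-multisemigroups of a multisemigroup `S` such that every finite subset of `S`
is contained in some member of `χ`, then Green's J-relation on `S` is the union of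
the diagonal relation with the J-relations of the members of `χ`. -/
theorem greenJ_eq_iff_of_directed {S : Type*} (mul : S → S → Set S)
    (assoc : ∀ a b c : S, (⋃ t ∈ mul a b, mul t c) = ⋃ u ∈ mul b c, mul a u)
    (χ : Set (Set S)) (hχ : ∀ T ∈ χ, IsSubMultisemigroup mul T)
    (hfin : ∀ F : Set S, F.Finite → ∃ T ∈ χ, F ⊆ T) :
    ∀ x y : S, greenJ mul Set.univ x = greenJ mul Set.univ y ↔
      x = y ∨ ∃ T ∈ χ, x ∈ T ∧ y ∈ T ∧ greenJ mul T x = greenJ mul T y := by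
  have huniv : IsSubMultisemigroup mul (Set.univ : Set S) := fun a _ b _ z _ => trivial
  intro x y
  constructor
  · intro h
    by_cases hxy : x = y
    · exact Or.inl hxy
    have hyx : y ∈ greenJ mul Set.univ x := h ▸ self_mem_greenJ
    have hxyJ : x ∈ greenJ mul Set.univ y := h.symm ▸ self_mem_greenJ
    -- extract finite witness sets
    have extract : ∀ a b : S, b ∈ greenJ mul Set.univ a →
        ∃ W : Set S, W.Finite ∧ b ∈ greenJ mul W a := by
      intro a b hb
      rw [mem_greenJ] at hb
      rcases hb with rfl | ⟨s, _, hb⟩ | ⟨s, _, hb⟩ | ⟨s, _, t, _, u, hu, hb⟩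
      · exact ⟨∅, Set.finite_empty, self_mem_greenJ⟩
      · exact ⟨{s}, Set.finite_singleton s, mem_greenJ.mpr (Or.inr (Or.inl ⟨s, rfl, hb⟩))⟩
      · exact ⟨{s}, Set.finite_singleton s,
          mem_greenJ.mpr (Or.inr (Or.inr (Or.inl ⟨s, rfl, hb⟩)))⟩
      · exact ⟨{s, t}, (Set.finite_singleton t).insert s,
          mem_greenJ.mpr (Or.inr (Or.inr (Or.inr
            ⟨s, Or.inl rfl, t, Or.inr rfl, u, hu, hb⟩)))⟩
    obtain ⟨W1, hW1, hyW1⟩ := extract x y hyx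
    obtain ⟨W2, hW2, hxW2⟩ := extract y x hxyJ
    obtain ⟨T, hTχ, hsub⟩ := hfin ({x, y} ∪ W1 ∪ W2)
      (((Set.finite_singleton y).insert x).union hW1 |>.union hW2)
    have hxT : x ∈ T := hsub (Or.inl (Or.inl (Or.inl rfl)))
    have hyT : y ∈ T := hsub (Or.inl (Or.inl (Or.inr rfl)))
    have hW1T : W1 ⊆ T := fun w hw => hsub (Or.inl (Or.inr hw))
    have hW2T : W2 ⊆ T := fun w hw => hsub (Or.inr hw)
    refine Or.inr ⟨T, hTχ, hxT, hyT, greenJ_eq assoc (hχ T hTχ)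
      (greenJ_mono hW1T x hyW1) (greenJ_mono hW2T y hxW2)⟩
  · rintro (rfl | ⟨T, hTχ, hxT, hyT, hJ⟩)
    · rfl
    · have hyx : y ∈ greenJ mul T x := hJ ▸ self_mem_greenJ
      have hxyJ : x ∈ greenJ mul T y := hJ.symm ▸ self_mem_greenJ
      exact greenJ_eq assoc huniv
        (greenJ_mono (Set.subset_univ T) x hyx)
        (greenJ_mono (Set.subset_univ T) y hxyJ)
end

section
/- Let S be a multisemigroup and let χ be a family of sub-multisemigroups of S such that every finite subset of S is contained in some member of χ. For a subset T ⊆ S let D_T denote the join, in the lattice of equivalence relations on T, of the equivalence relations 'L^T_x = L^T_y' and 'R^T_x = R^T_y' on T, and let D_S denote the corresponding join of L- and R-equivalence on S. Then for all x, y ∈ S: D_S relates x and y if and only if x = y, or there exists T ∈ χ with x ∈ T, y ∈ T such that D_T relates x and y. -/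
open Set

/-- Green's D-relation relative to a subset `T` of a multisemigroup: the join, in
the lattice of equivalence relations on the subtype `T`, of L-equivalence and
R-equivalence relative to `T`. -/
def greenDSetoid {S : Type*} (mul : S → S → Set S) (T : Set S) : Setoid T :=
  Setoid.ker (fun a : T => greenL mul T (a : S)) ⊔
    Setoid.ker (fun a : T => greenR mul T (a : S))

/-! Each step `x ∈ L_y` is witnessed by one element `s` with `x ∈ s y`, and associativity makes
`x ∈ L^T_y` a preorder whenever `T` is closed under `mul`. Hence L- and R-equivalence in `S`
hold already in every sub-multisemigroup containing finitely many witnesses, and being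
D-related in every sub-multisemigroup containing some finite set is an equivalence relation;
it thus contains `D_S`, and the finite set lies in a member of `χ`. Conversely `L^T_x = L^T_y`
gives `x ∈ L_y` and `y ∈ L_x`, hence `L_x = L_y`, and likewise for R, so `D_T ⊆ D_S`. -/

section

variable {S : Type*} {mul : S → S → Set S}

def IsMultisemigroup (mul : S → S → Set S) : Prop :=
  ∀ a b c : S, (⋃ t ∈ mul a b, mul t c) = ⋃ u ∈ mul b c, mul a u

theorem IsMultisemigroup.flip (hmul : IsMultisemigroup mul) : IsMultisemigroup (flip mul) :=
  fun a b c => (hmul c b a).symm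

theorem IsSubMultisemigroup.flip {T : Set S} (hT : IsSubMultisemigroup mul T) :
    IsSubMultisemigroup (flip mul) T :=
  fun a ha b hb => hT b hb a ha

theorem isSubMultisemigroup_univ : IsSubMultisemigroup mul univ :=
  fun _ _ _ _ => subset_univ _

theorem mem_greenL_iff {T : Set S} {x y : S} :
    y ∈ greenL mul T x ↔ y = x ∨ ∃ s ∈ T, y ∈ mul s x := by
  simp [greenL]

theorem mem_greenL_self (T : Set S) (x : S) : x ∈ greenL mul T x :=
  mem_union_left _ rfl

theorem greenL_mono {T T' : Set S} (hTT' : T ⊆ T') (x : S) :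
    greenL mul T x ⊆ greenL mul T' x :=
  union_subset_union_right _ (biUnion_subset_biUnion_left hTT')

theorem greenL_subset_greenL (hmul : IsMultisemigroup mul) {T : Set S}
    (hT : IsSubMultisemigroup mul T) {x y : S} (h : x ∈ greenL mul T y) :
    greenL mul T x ⊆ greenL mul T y := by
  intro z hz
  rcases mem_greenL_iff.1 h with rfl | ⟨s, hs, hxs⟩
  · exact hz
  rcases mem_greenL_iff.1 hz with rfl | ⟨t, ht, hzt⟩
  · exact h
  -- `z ∈ t (s y) = (t s) y`, and `t s ⊆ T`
  have hz' : z ∈ ⋃ v ∈ mul t s, mul v y := by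
    rw [hmul]
    exact mem_biUnion hxs hzt
  obtain ⟨v, hv, hzv⟩ := mem_iUnion₂.1 hz'
  exact mem_greenL_iff.2 (Or.inr ⟨v, hT t ht s hs hv, hzv⟩)

theorem greenL_eq_greenL_iff (hmul : IsMultisemigroup mul) {T : Set S}
    (hT : IsSubMultisemigroup mul T) {x y : S} :
    greenL mul T x = greenL mul T y ↔ x ∈ greenL mul T y ∧ y ∈ greenL mul T x := by
  refine ⟨fun h => ⟨h ▸ mem_greenL_self T x, h ▸ mem_greenL_self T y⟩, fun ⟨hxy, hyx⟩ => ?_⟩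
  exact (greenL_subset_greenL hmul hT hxy).antisymm (greenL_subset_greenL hmul hT hyx)

theorem greenL_eq_greenL_of_subset (hmul : IsMultisemigroup mul) {T T' : Set S}
    (hT' : IsSubMultisemigroup mul T') (hTT' : T ⊆ T') {x y : S}
    (h : greenL mul T x = greenL mul T y) : greenL mul T' x = greenL mul T' y := by
  rw [greenL_eq_greenL_iff hmul hT']
  exact ⟨greenL_mono hTT' y (h ▸ mem_greenL_self T x),
    greenL_mono hTT' x (h ▸ mem_greenL_self T y)⟩

theorem greenR_eq_greenR_of_subset (hmul : IsMultisemigroup mul) {T T' : Set S}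
    (hT' : IsSubMultisemigroup mul T') (hTT' : T ⊆ T') {x y : S}
    (h : greenR mul T x = greenR mul T y) : greenR mul T' x = greenR mul T' y :=
  greenL_eq_greenL_of_subset hmul.flip hT'.flip hTT' h

theorem exists_finite_mem_greenL {T : Set S} {x y : S} (h : y ∈ greenL mul T x) :
    ∃ F ⊆ T, F.Finite ∧ y ∈ greenL mul F x := by
  rcases mem_greenL_iff.1 h with rfl | ⟨s, hs, hys⟩
  · exact ⟨∅, empty_subset T, finite_empty, mem_greenL_self _ _⟩
  · exact ⟨{s}, singleton_subset_iff.2 hs, finite_singleton s,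
      mem_greenL_iff.2 (Or.inr ⟨s, rfl, hys⟩)⟩

theorem exists_finite_forall_greenL_eq (hmul : IsMultisemigroup mul) {x y : S}
    (h : greenL mul univ x = greenL mul univ y) :
    ∃ F : Set S, F.Finite ∧ ∀ T, IsSubMultisemigroup mul T → F ⊆ T →
      greenL mul T x = greenL mul T y := by
  obtain ⟨hxy, hyx⟩ := (greenL_eq_greenL_iff hmul isSubMultisemigroup_univ).1 h
  obtain ⟨F, -, hF, hxF⟩ := exists_finite_mem_greenL hxy
  obtain ⟨G, -, hG, hyG⟩ := exists_finite_mem_greenL hyx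
  refine ⟨F ∪ G, hF.union hG, fun T hT hFGT => (greenL_eq_greenL_iff hmul hT).2 ⟨?_, ?_⟩⟩
  · exact greenL_mono (subset_union_left.trans hFGT) y hxF
  · exact greenL_mono (subset_union_right.trans hFGT) x hyG

theorem exists_finite_forall_greenR_eq (hmul : IsMultisemigroup mul) {x y : S}
    (h : greenR mul univ x = greenR mul univ y) :
    ∃ F : Set S, F.Finite ∧ ∀ T, IsSubMultisemigroup mul T → F ⊆ T →
      greenR mul T x = greenR mul T y := by
  obtain ⟨F, hF, hFT⟩ := exists_finite_forall_greenL_eq hmul.flip h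
  exact ⟨F, hF, fun T hT => hFT T hT.flip⟩

theorem greenDSetoid_le_comap_inclusion (hmul : IsMultisemigroup mul) {T T' : Set S}
    (hT' : IsSubMultisemigroup mul T') (hTT' : T ⊆ T') :
    greenDSetoid mul T ≤ (greenDSetoid mul T').comap (inclusion hTT') := by
  refine sup_le (fun x y h => ?_) (fun x y h => ?_)
  · exact Setoid.le_def.1 le_sup_left (greenL_eq_greenL_of_subset hmul hT' hTT' h)
  · exact Setoid.le_def.1 le_sup_right (greenR_eq_greenR_of_subset hmul hT' hTT' h)

def eventuallyGreenDSetoid (mul : S → S → Set S) : Setoid S where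
  r x y := ∃ F : Set S, F.Finite ∧ ∀ T, IsSubMultisemigroup mul T → F ⊆ T →
    ∃ (hx : x ∈ T) (hy : y ∈ T), greenDSetoid mul T ⟨x, hx⟩ ⟨y, hy⟩
  iseqv := by
    refine ⟨fun x => ⟨{x}, finite_singleton x, fun T _ hxT => ?_⟩, ?_, ?_⟩
    · exact ⟨singleton_subset_iff.1 hxT, _, (greenDSetoid mul T).refl' _⟩
    · rintro x y ⟨F, hF, hFT⟩
      refine ⟨F, hF, fun T hT hFT' => ?_⟩
      obtain ⟨hx, hy, h⟩ := hFT T hT hFT'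
      exact ⟨hy, hx, (greenDSetoid mul T).symm' h⟩
    · rintro x y z ⟨F, hF, hFT⟩ ⟨G, hG, hGT⟩
      refine ⟨F ∪ G, hF.union hG, fun T hT hFGT => ?_⟩
      obtain ⟨hx, hy, hxy⟩ := hFT T hT (subset_union_left.trans hFGT)
      obtain ⟨_, hz, hyz⟩ := hGT T hT (subset_union_right.trans hFGT)
      exact ⟨hx, hz, (greenDSetoid mul T).trans' hxy hyz⟩

theorem eventuallyGreenDSetoid_rel_of_forall {x y : S} {F : Set S} (hF : F.Finite)
    (h : ∀ T, IsSubMultisemigroup mul T → F ⊆ T →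
      greenL mul T x = greenL mul T y ∨ greenR mul T x = greenR mul T y) :
    eventuallyGreenDSetoid mul x y := by
  refine ⟨insert x (insert y F), (hF.insert y).insert x, fun T hT hFT => ?_⟩
  obtain ⟨hx, hyF⟩ := insert_subset_iff.1 hFT
  obtain ⟨hy, hF⟩ := insert_subset_iff.1 hyF
  refine ⟨hx, hy, (h T hT hF).elim (fun hL => ?_) (fun hR => ?_)⟩
  · exact Setoid.le_def.1 le_sup_left hL
  · exact Setoid.le_def.1 le_sup_right hR

theorem greenDSetoid_univ_le_comap_eventuallyGreenDSetoid (hmul : IsMultisemigroup mul) :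
    greenDSetoid mul univ ≤ (eventuallyGreenDSetoid mul).comap Subtype.val := by
  refine sup_le (fun x y h => ?_) (fun x y h => ?_)
  · obtain ⟨F, hF, hFT⟩ := exists_finite_forall_greenL_eq hmul h
    exact eventuallyGreenDSetoid_rel_of_forall hF fun T hT hFT' => Or.inl (hFT T hT hFT')
  · obtain ⟨F, hF, hFT⟩ := exists_finite_forall_greenR_eq hmul h
    exact eventuallyGreenDSetoid_rel_of_forall hF fun T hT hFT' => Or.inr (hFT T hT hFT')

end

/-- Proposition 2.13 (cDbootleg): if `χ` is a family of sub-multisemigroups of a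
multisemigroup `S` such that every finite subset of `S` is contained in some member
of `χ`, then Green's D-relation on `S` (the join of L- and R-equivalence) is the
union of the diagonal relation with the D-relations of the members of `χ`. -/
theorem greenD_iff_of_directed {S : Type*} (mul : S → S → Set S)
    (assoc : ∀ a b c : S, (⋃ t ∈ mul a b, mul t c) = ⋃ u ∈ mul b c, mul a u)
    (χ : Set (Set S)) (hχ : ∀ T ∈ χ, IsSubMultisemigroup mul T)
    (hfin : ∀ F : Set S, F.Finite → ∃ T ∈ χ, F ⊆ T) :
    ∀ x y : S, (greenDSetoid mul Set.univ).r ⟨x, mem_univ x⟩ ⟨y, mem_univ y⟩ ↔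
      x = y ∨ ∃ T ∈ χ, ∃ (hx : x ∈ T) (hy : y ∈ T),
        (greenDSetoid mul T).r ⟨x, hx⟩ ⟨y, hy⟩ := by
  intro x y
  constructor
  · intro h
    obtain ⟨F, hF, hFT⟩ := greenDSetoid_univ_le_comap_eventuallyGreenDSetoid assoc h
    obtain ⟨T, hTχ, hFT'⟩ := hfin F hF
    exact Or.inr ⟨T, hTχ, hFT T (hχ T hTχ) hFT'⟩
  · rintro (rfl | ⟨T, -, hx, hy, h⟩)
    · exact (greenDSetoid mul univ).refl' _
    · exact greenDSetoid_le_comap_inclusion assoc isSubMultisemigroup_univ (subset_univ T) h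
end

section
/- Let k be a field, G an additive abelian group, and C a k-linear additive idempotent complete category equipped with a shift by G (a family of autoequivalences X ↦ X⟦g⟧ for g ∈ G with coherent isomorphisms X⟦g⟧⟦h⟧ ≅ X⟦g+h⟧ and X⟦0⟧ ≅ X, as in Mathlib's HasShift). Assume: (i) every Hom-space of C is finite-dimensional over k; (ii) there exist finitely many objects H₁, …, H_m such that every indecomposable object of C is isomorphic to H_i⟦g⟧ for some i and some g ∈ G; (iii) for all objects X, Y of C, the set {g ∈ G : there is a nonzero morphism X → Y⟦g⟧} is finite. Then every morphism p : X → Y of C admits a weak cokernel (a morphism c : Y → Z with p ≫ c = 0 such that every t : Y → T with p ≫ t = 0 factors as t = c ≫ u for some u : Z → T) and a weak kernel (the dual notion). -/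
open CategoryTheory CategoryTheory.Limits

/-- An object of an additive category is indecomposable if it is non-zero and any
biproduct decomposition of it has a zero summand. -/
def IsIndecomposableObj {C : Type*} [Category C] [Preadditive C]
    [HasBinaryBiproducts C] (X : C) : Prop :=
  ¬ IsZero X ∧ ∀ (Y Z : C), (X ≅ Y ⊞ Z) → IsZero Y ∨ IsZero Z

/-! By induction on `dim End`, a Hom-finite category is generated under binary biproducts by
zero objects and indecomposables, so a map `t : T ⟶ X` with `t ≫ p = 0` factors through a given
`i : W ⟶ X` as soon as its restrictions to indecomposable summands do. By (ii) and (iii), the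
indecomposables admitting a nonzero map to `X` form, up to isomorphism, a finite set, so all of them
are retracts of a single object `M`. The kernel of `Hom(M, X) → Hom(M, Y)` is finite-dimensional;
a finite spanning family `s₁, …, sₙ` assembles into `Mⁿ ⟶ X`, which is a weak kernel of `p`.
Weak cokernels are dual. -/

open Module

section LinearCategory

variable (k : Type*) [Field k] {C : Type*} [Category C] [Preadditive C] [Linear k C]

section BinaryBiproducts

variable [HasBinaryBiproducts C]

noncomputable def endProdToEndOfIsoBiprod {T Y Z : C} (e : T ≅ Y ⊞ Z) :
    ((Y ⟶ Y) × (Z ⟶ Z)) →ₗ[k] (T ⟶ T) where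
  toFun q := e.hom ≫ biprod.map q.1 q.2 ≫ e.inv
  map_add' q q' := by
    rw [← Preadditive.comp_add, ← Preadditive.add_comp]
    congr 2
    ext <;> simp
  map_smul' c q := by
    rw [RingHom.id_apply, ← Linear.comp_smul, ← Linear.smul_comp]
    congr 2
    ext <;> simp

theorem endProdToEndOfIsoBiprod_injective {T Y Z : C} (e : T ≅ Y ⊞ Z) :
    Function.Injective (endProdToEndOfIsoBiprod k e) := by
  intro q q' h
  have h' : biprod.map q.1 q.2 = biprod.map q'.1 q'.2 := by
    simpa [endProdToEndOfIsoBiprod] using h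
  ext1
  · simpa using congrArg (biprod.inl ≫ · ≫ biprod.fst) h'
  · simpa using congrArg (biprod.inr ≫ · ≫ biprod.snd) h'

theorem finrank_end_add_finrank_end_le {T Y Z : C} [FiniteDimensional k (T ⟶ T)]
    [FiniteDimensional k (Y ⟶ Y)] [FiniteDimensional k (Z ⟶ Z)]
    (e : T ≅ Y ⊞ Z) : finrank k (Y ⟶ Y) + finrank k (Z ⟶ Z) ≤ finrank k (T ⟶ T) := by
  rw [← Module.finrank_prod]
  exact LinearMap.finrank_le_finrank_of_injective (endProdToEndOfIsoBiprod_injective k e)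

omit [HasBinaryBiproducts C] in
theorem finrank_end_pos_of_not_isZero {Y : C} [FiniteDimensional k (Y ⟶ Y)] (hY : ¬ IsZero Y) :
    0 < finrank k (Y ⟶ Y) :=
  Module.finrank_pos_iff_exists_ne_zero.mpr ⟨𝟙 Y, fun h => hY ((IsZero.iff_id_eq_zero Y).mpr h)⟩

/-- Splitting off two nonzero summands lowers `dim End`, which makes this induction well
founded. -/
theorem induction_on_isIndecomposableObj (hfd : ∀ X Y : C, FiniteDimensional k (X ⟶ Y))
    {P : C → Prop} (isZero : ∀ T, IsZero T → P T)
    (indecomposable : ∀ T, IsIndecomposableObj T → P T)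
    (of_iso_biprod : ∀ {T Y Z : C}, (T ≅ Y ⊞ Z) → P Y → P Z → P T) (T : C) : P T := by
  induction hn : finrank k (T ⟶ T) using Nat.strong_induction_on generalizing T with
  | _ n ih =>
    by_cases hz : IsZero T
    · exact isZero T hz
    by_cases hi : IsIndecomposableObj T
    · exact indecomposable T hi
    obtain ⟨Y, Z, e, hY, hZ⟩ : ∃ (Y Z : C) (_ : T ≅ Y ⊞ Z), ¬ IsZero Y ∧ ¬ IsZero Z := by
      simpa [IsIndecomposableObj, hz] using hi
    have hle := finrank_end_add_finrank_end_le k e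
    have hYpos := finrank_end_pos_of_not_isZero k hY
    have hZpos := finrank_end_pos_of_not_isZero k hZ
    exact of_iso_biprod e (ih _ (by omega) Y rfl) (ih _ (by omega) Z rfl)

end BinaryBiproducts

section FiniteBiproducts

variable [HasFiniteBiproducts C]

theorem exists_eq_comp_biproduct_desc_of_mem_span {ι : Type} [Fintype ι] {M X : C}
    (s : ι → (M ⟶ X)) {g : M ⟶ X} (hg : g ∈ Submodule.span k (Set.range s)) :
    ∃ u : M ⟶ ⨁ fun _ : ι => M, g = u ≫ biproduct.desc s := by
  obtain ⟨c, rfl⟩ := (Submodule.mem_span_range_iff_exists_fun k).mp hg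
  exact ⟨biproduct.lift fun b => c b • 𝟙 M, by simp [biproduct.lift_desc]⟩

theorem exists_eq_biproduct_lift_comp_of_mem_span {ι : Type} [Fintype ι] {Y M : C}
    (s : ι → (Y ⟶ M)) {g : Y ⟶ M} (hg : g ∈ Submodule.span k (Set.range s)) :
    ∃ u : (⨁ fun _ : ι => M) ⟶ M, g = biproduct.lift s ≫ u := by
  obtain ⟨c, rfl⟩ := (Submodule.mem_span_range_iff_exists_fun k).mp hg
  exact ⟨biproduct.desc fun b => c b • 𝟙 M, by simp [biproduct.lift_desc]⟩

/-- Finitely many maps `sᵢ : M ⟶ X` span the kernel of `- ≫ p`; take `i = (sᵢ)ᵢ : Mⁿ ⟶ X`. -/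
theorem exists_weakKernel_relative (hfd : ∀ X Y : C, FiniteDimensional k (X ⟶ Y))
    {X Y : C} (p : X ⟶ Y) (M : C) :
    ∃ (W : C) (i : W ⟶ X), i ≫ p = 0 ∧ ∀ g : M ⟶ X, g ≫ p = 0 → ∃ u : M ⟶ W, g = u ≫ i := by
  obtain ⟨n, s, hs⟩ := Submodule.fg_iff_exists_fin_generating_family.mp
    (IsNoetherian.noetherian (LinearMap.ker (Linear.rightComp k M p)))
  refine ⟨_, biproduct.desc s, ?_, fun g hg => ?_⟩
  · ext b
    have hsb : s b ∈ LinearMap.ker (Linear.rightComp k M p) := hs ▸ Submodule.subset_span ⟨b, rfl⟩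
    simpa using hsb
  · exact exists_eq_comp_biproduct_desc_of_mem_span k s (hs ▸ hg)

theorem exists_weakCokernel_relative (hfd : ∀ X Y : C, FiniteDimensional k (X ⟶ Y))
    {X Y : C} (p : X ⟶ Y) (M : C) :
    ∃ (Z : C) (c : Y ⟶ Z), p ≫ c = 0 ∧ ∀ g : Y ⟶ M, p ≫ g = 0 → ∃ u : Z ⟶ M, g = c ≫ u := by
  obtain ⟨n, s, hs⟩ := Submodule.fg_iff_exists_fin_generating_family.mp
    (IsNoetherian.noetherian (LinearMap.ker (Linear.leftComp k M p)))
  refine ⟨_, biproduct.lift s, ?_, fun g hg => ?_⟩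
  · ext b
    have hsb : s b ∈ LinearMap.ker (Linear.leftComp k M p) := hs ▸ Submodule.subset_span ⟨b, rfl⟩
    simpa using hsb
  · exact exists_eq_biproduct_lift_comp_of_mem_span k s (hs ▸ hg)

end FiniteBiproducts

variable [HasFiniteBiproducts C] [HasBinaryBiproducts C]

theorem exists_weakKernel_of_retract (hfd : ∀ X Y : C, FiniteDimensional k (X ⟶ Y))
    {X Y : C} (p : X ⟶ Y) (M : C)
    (hM : ∀ T : C, IsIndecomposableObj T → (∃ f : T ⟶ X, f ≠ 0) → Nonempty (Retract T M)) :
    ∃ (W : C) (i : W ⟶ X), i ≫ p = 0 ∧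
      ∀ (T : C) (t : T ⟶ X), t ≫ p = 0 → ∃ u : T ⟶ W, t = u ≫ i := by
  obtain ⟨W, i, hip, hfac⟩ := exists_weakKernel_relative k hfd p M
  refine ⟨W, i, hip, fun T => ?_⟩
  induction T using induction_on_isIndecomposableObj k hfd with
  | isZero T hT => exact fun t _ => ⟨0, hT.eq_of_src _ _⟩
  | indecomposable T hT =>
    intro t ht
    by_cases h0 : t = 0
    · exact ⟨0, by simp [h0]⟩
    obtain ⟨ρ⟩ := hM T hT ⟨t, h0⟩
    obtain ⟨u, hu⟩ := hfac (ρ.r ≫ t) (by simp [ht])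
    exact ⟨ρ.i ≫ u, by rw [Category.assoc, ← hu, ρ.retract_assoc]⟩
  | of_iso_biprod e hY hZ =>
    intro t ht
    obtain ⟨u, hu⟩ := hY (biprod.inl ≫ e.inv ≫ t) (by simp [ht])
    obtain ⟨v, hv⟩ := hZ (biprod.inr ≫ e.inv ≫ t) (by simp [ht])
    refine ⟨e.hom ≫ biprod.desc u v, ?_⟩
    rw [← cancel_epi e.inv]
    ext <;> simp [hu, hv]

theorem exists_weakCokernel_of_retract (hfd : ∀ X Y : C, FiniteDimensional k (X ⟶ Y))
    {X Y : C} (p : X ⟶ Y) (M : C)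
    (hM : ∀ T : C, IsIndecomposableObj T → (∃ f : Y ⟶ T, f ≠ 0) → Nonempty (Retract T M)) :
    ∃ (Z : C) (c : Y ⟶ Z), p ≫ c = 0 ∧
      ∀ (T : C) (t : Y ⟶ T), p ≫ t = 0 → ∃ u : Z ⟶ T, t = c ≫ u := by
  obtain ⟨Z, c, hpc, hfac⟩ := exists_weakCokernel_relative k hfd p M
  refine ⟨Z, c, hpc, fun T => ?_⟩
  induction T using induction_on_isIndecomposableObj k hfd with
  | isZero T hT => exact fun t _ => ⟨0, hT.eq_of_tgt _ _⟩
  | indecomposable T hT =>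
    intro t ht
    by_cases h0 : t = 0
    · exact ⟨0, by simp [h0]⟩
    obtain ⟨ρ⟩ := hM T hT ⟨t, h0⟩
    obtain ⟨u, hu⟩ := hfac (t ≫ ρ.i) (by simp [reassoc_of% ht])
    exact ⟨u ≫ ρ.r, by rw [← Category.assoc, ← hu, Category.assoc, ρ.retract, Category.comp_id]⟩
  | of_iso_biprod e hY hZ =>
    intro t ht
    obtain ⟨u, hu⟩ := hY (t ≫ e.hom ≫ biprod.fst) (by simp [reassoc_of% ht])
    obtain ⟨v, hv⟩ := hZ (t ≫ e.hom ≫ biprod.snd) (by simp [reassoc_of% ht])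
    refine ⟨biprod.lift u v ≫ e.inv, ?_⟩
    rw [← cancel_mono e.hom]
    ext <;> simp [hu, hv]

end LinearCategory

section Shift

variable {C : Type*} [Category C] [Preadditive C]

theorem exists_retract_biproduct_of_finite [HasFiniteBiproducts C] {ι : Type*} [Finite ι]
    (F : ι → C) : ∃ M : C, ∀ j, Nonempty (Retract (F j) M) := by
  obtain ⟨n, ⟨e⟩⟩ := Finite.exists_equiv_fin ι
  refine ⟨⨁ (F ∘ e.symm), fun j => ?_⟩
  rw [← e.symm_apply_apply j]
  exact ⟨⟨biproduct.ι (F ∘ e.symm) (e j), biproduct.π (F ∘ e.symm) (e j), by simp⟩⟩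

variable (G : Type*) [AddCommGroup G] [HasShift C G]

theorem finite_setOf_shift_hom_ne_zero (A X : C)
    (h : {g : G | ∃ f : A ⟶ (shiftFunctor C g).obj X, f ≠ 0}.Finite) :
    {g : G | ∃ f : (shiftFunctor C g).obj A ⟶ X, f ≠ 0}.Finite := by
  refine h.neg.subset fun g ⟨f, hf⟩ => Set.mem_neg.mpr ?_
  refine ⟨(shiftFunctorCompIsoId C g (-g) (add_neg_cancel g)).inv.app A ≫
    (shiftFunctor C (-g)).map f, ?_⟩
  rwa [Ne, comp_eq_zero_iff_of_epi, Functor.map_eq_zero_iff]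

theorem exists_retract_of_isIndecomposableObj [HasFiniteBiproducts C] [HasBinaryBiproducts C]
    {ι : Type*} [Finite ι] (H : ι → C)
    (hH : ∀ T : C, IsIndecomposableObj T →
      ∃ (i : ι) (g : G), Nonempty (T ≅ (shiftFunctor C g).obj (H i)))
    (Q : C → Prop) (hQ : ∀ {T T' : C}, (T ≅ T') → Q T → Q T')
    (hfin : ∀ i, {g : G | Q ((shiftFunctor C g).obj (H i))}.Finite) :
    ∃ M : C, ∀ T : C, IsIndecomposableObj T → Q T → Nonempty (Retract T M) := by
  have := fun i => (hfin i).to_subtype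
  obtain ⟨M, hM⟩ := exists_retract_biproduct_of_finite
    fun j : Σ i, {g : G | Q ((shiftFunctor C g).obj (H i))} => (shiftFunctor C j.2.1).obj (H j.1)
  refine ⟨M, fun T hT hQT => ?_⟩
  obtain ⟨i, g, ⟨e⟩⟩ := hH T hT
  obtain ⟨ρ⟩ := hM ⟨i, g, hQ e hQT⟩
  exact ⟨(Retract.ofIso e).trans ρ⟩

end Shift

theorem hasWeakKernels_and_weakCokernels_of_graded_finitary_general
    (k : Type*) [Field k] (G : Type*) [AddCommGroup G]
    {C : Type*} [Category C] [Preadditive C] [Linear k C]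
    [HasFiniteBiproducts C] [HasBinaryBiproducts C] [HasShift C G]
    (hfd : ∀ X Y : C, FiniteDimensional k (X ⟶ Y))
    (hindec : ∃ (m : ℕ) (H : Fin m → C), ∀ X : C, IsIndecomposableObj X →
      ∃ (i : Fin m) (g : G), Nonempty (X ≅ (shiftFunctor C g).obj (H i)))
    (hhomfin : ∀ X Y : C,
      {g : G | ∃ f : X ⟶ (shiftFunctor C g).obj Y, f ≠ 0}.Finite) :
    ∀ {X Y : C} (p : X ⟶ Y),
      (∃ (Z : C) (c : Y ⟶ Z), p ≫ c = 0 ∧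
        ∀ (T : C) (t : Y ⟶ T), p ≫ t = 0 → ∃ u : Z ⟶ T, t = c ≫ u) ∧
      (∃ (W : C) (i : W ⟶ X), i ≫ p = 0 ∧
        ∀ (T : C) (t : T ⟶ X), t ≫ p = 0 → ∃ u : T ⟶ W, t = u ≫ i) := by
  obtain ⟨m, H, hH⟩ := hindec
  intro X Y p
  obtain ⟨M, hM⟩ := exists_retract_of_isIndecomposableObj G H hH (fun T => ∃ f : Y ⟶ T, f ≠ 0)
    (fun e ⟨f, hf⟩ => ⟨f ≫ e.hom, fun h => hf (zero_of_comp_mono e.hom h)⟩)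
    (fun i => hhomfin Y (H i))
  obtain ⟨M', hM'⟩ := exists_retract_of_isIndecomposableObj G H hH (fun T => ∃ f : T ⟶ X, f ≠ 0)
    (fun e ⟨f, hf⟩ => ⟨e.inv ≫ f, fun h => hf (zero_of_epi_comp e.inv h)⟩)
    (fun i => finite_setOf_shift_hom_ne_zero G (H i) X (hhomfin (H i) X))
  exact ⟨exists_weakCokernel_of_retract k hfd p M hM, exists_weakKernel_of_retract k hfd p M' hM'⟩

/-- Proposition 6.16: let `C` be a `k`-linear additive idempotent complete category
with a shift by an abelian group `G`, such that (i) all Hom-spaces are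
finite-dimensional over `k`; (ii) there are finitely many objects `H₁, …, H_m` such
that every indecomposable object is isomorphic to some shift `H_i⟦g⟧`; and
(iii) for all objects `X, Y` only finitely many `g ∈ G` admit a nonzero morphism
`X ⟶ Y⟦g⟧`. Then every morphism of `C` admits a weak cokernel and a weak kernel. -/
theorem hasWeakKernels_and_weakCokernels_of_graded_finitary
    (k : Type*) [Field k] (G : Type*) [AddCommGroup G]
    {C : Type*} [Category C] [Preadditive C] [Linear k C]
    [HasFiniteBiproducts C] [HasBinaryBiproducts C] [IsIdempotentComplete C] [HasShift C G]
    (hfd : ∀ X Y : C, FiniteDimensional k (X ⟶ Y))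
    (hindec : ∃ (m : ℕ) (H : Fin m → C), ∀ X : C, IsIndecomposableObj X →
      ∃ (i : Fin m) (g : G), Nonempty (X ≅ (shiftFunctor C g).obj (H i)))
    (hhomfin : ∀ X Y : C,
      {g : G | ∃ f : X ⟶ (shiftFunctor C g).obj Y, f ≠ 0}.Finite) :
    ∀ {X Y : C} (p : X ⟶ Y),
      (∃ (Z : C) (c : Y ⟶ Z), p ≫ c = 0 ∧
        ∀ (T : C) (t : Y ⟶ T), p ≫ t = 0 → ∃ u : Z ⟶ T, t = c ≫ u) ∧
      (∃ (W : C) (i : W ⟶ X), i ≫ p = 0 ∧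
        ∀ (T : C) (t : T ⟶ X), t ≫ p = 0 → ∃ u : T ⟶ W, t = u ≫ i) :=
  hasWeakKernels_and_weakCokernels_of_graded_finitary_general k G hfd hindec hhomfin
end
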